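/- The integral ∫_{-1}^{1} (1/√(1 + x² z²) - 1) · (1/|z|) dz equals 2(log 2 - log(√(x² + 1) + 1)) for every real x. -/

import Mathlib

/-!
Multiplying numerator and denominator by `1 + √(1 + x²z²)` turns the integrand into
`-x²|z| / (√(1 + x²z²) (1 + √(1 + x²z²)))`, a continuous even function of `z`. Its integral over
`[-1, 1]` is twice the integral over `[0, 1]`, where `-log (1 + √(1 + x²t²))` is an antiderivative.
-/

open Real MeasureTheory intervalIntegral

theorem intervalIntegral.integral_comp_abs {E : Type*} [NormedAddCommGroup E] [NormedSpace ℝ E]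
    {f : ℝ → E} {c : ℝ} (hc : 0 ≤ c) (hf : IntervalIntegrable f volume 0 c) :
    ∫ z in -c..c, f |z| = (2 : ℝ) • ∫ z in 0..c, f z := by
  have habs : Set.EqOn (fun z ↦ f |z|) f (Set.uIcc 0 c) := fun z hz ↦ by
    rw [Set.uIcc_of_le hc] at hz
    simp only [abs_of_nonneg hz.1]
  have hpos : IntervalIntegrable (fun z ↦ f |z|) volume 0 c :=
    hf.congr (habs.symm.mono Set.Ioc_subset_Icc_self)
  have hneg : IntervalIntegrable (fun z ↦ f |z|) volume (-c) 0 := by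
    simpa only [abs_neg, neg_zero] using (IntervalIntegrable.iff_comp_neg).mp hpos.symm
  have hreflect : ∫ z in -c..0, f |z| = ∫ z in 0..c, f |z| := by
    simpa only [abs_neg, neg_zero] using (integral_comp_neg (a := 0) (b := c) fun z ↦ f |z|).symm
  rw [← integral_add_adjacent_intervals hneg hpos, hreflect, integral_congr habs, two_smul]

noncomputable def rationalizedIntegrand (x t : ℝ) : ℝ :=
  -(x ^ 2 * t) / (√(1 + x ^ 2 * t ^ 2) * (1 + √(1 + x ^ 2 * t ^ 2)))

lemma one_le_sqrt_one_add_sq_mul_sq (x t : ℝ) : 1 ≤ √(1 + x ^ 2 * t ^ 2) :=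
  one_le_sqrt.mpr (le_add_of_nonneg_right (by positivity))

/-- At `z = 0` both sides vanish, the left one because `1 / |0| = 0`. -/
lemma one_div_sqrt_sub_one_mul_one_div_abs (x z : ℝ) :
    (1 / √(1 + x ^ 2 * z ^ 2) - 1) * (1 / |z|) = rationalizedIntegrand x |z| := by
  rcases eq_or_ne z 0 with rfl | hz
  · simp [rationalizedIntegrand]
  have hs := one_le_sqrt_one_add_sq_mul_sq x z
  have hsq : √(1 + x ^ 2 * z ^ 2) ^ 2 = 1 + x ^ 2 * z ^ 2 := sq_sqrt (by positivity)
  have : |z| ≠ 0 := abs_ne_zero.mpr hz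
  have : √(1 + x ^ 2 * z ^ 2) ≠ 0 := by positivity
  have : 1 + √(1 + x ^ 2 * z ^ 2) ≠ 0 := by positivity
  rw [rationalizedIntegrand, sq_abs]
  field_simp
  linear_combination x ^ 2 * sq_abs z - hsq

lemma continuous_rationalizedIntegrand (x : ℝ) : Continuous (rationalizedIntegrand x) :=
  Continuous.div (by fun_prop) (by fun_prop) fun t ↦ by
    have := one_le_sqrt_one_add_sq_mul_sq x t
    positivity

lemma hasDerivAt_neg_log_one_add_sqrt (x t : ℝ) :
    HasDerivAt (fun t ↦ -log (1 + √(1 + x ^ 2 * t ^ 2))) (rationalizedIntegrand x t) t := by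
  have hinner : HasDerivAt (fun t ↦ 1 + x ^ 2 * t ^ 2) (x ^ 2 * (2 * t)) t := by
    simpa using ((hasDerivAt_pow 2 t).const_mul (x ^ 2)).const_add 1
  have hlog := ((hinner.sqrt (by positivity)).const_add 1).log (by positivity)
  refine hlog.neg.congr_deriv ?_
  rw [rationalizedIntegrand]
  field_simp

lemma integral_zero_one_rationalizedIntegrand (x : ℝ) :
    ∫ t in (0 : ℝ)..1, rationalizedIntegrand x t = log 2 - log (√(x ^ 2 + 1) + 1) := by
  rw [integral_eq_sub_of_hasDerivAt (fun t _ ↦ hasDerivAt_neg_log_one_add_sqrt x t)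
    ((continuous_rationalizedIntegrand x).intervalIntegrable _ _)]
  norm_num [add_comm, sub_eq_add_neg]

/-- Explicit evaluation of the logarithmic integral appearing in the computation of `G(t,x)`
for the arctan test case. -/
theorem integral_one_div_sqrt_sub_one
    (x : ℝ) :
    (∫ z in (-1:ℝ)..1, (1 / Real.sqrt (1 + x ^ 2 * z ^ 2) - 1) * (1 / |z|))
      = 2 * (Real.log 2 - Real.log (Real.sqrt (x ^ 2 + 1) + 1)) := by
  simp only [one_div_sqrt_sub_one_mul_one_div_abs]
  rw [integral_comp_abs zero_le_one ((continuous_rationalizedIntegrand x).intervalIntegrable _ _),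
    integral_zero_one_rationalizedIntegrand, smul_eq_mul]
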